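/- (Sign preservation for the prox of the squared weighted ℓ₁-norm.) Let λ > 0, let d ∈ ℝ^p with d ≥ 0, let φ_d(x) = (1/2)(Σ_{i=1}^p d_i |x_i|)², and let x₀ ∈ ℝ^p. Then the minimizer x* of (1/2)‖x − x₀‖² + λφ_d(x) over ℝ^p satisfies x₀ᵢ · x*ᵢ ≥ 0 for every coordinate i. Moreover, for any sign vector σ ∈ {−1, 1}^p, prox_{λφ_d}(σ ⊙ x₀) = σ ⊙ prox_{λφ_d}(x₀), where ⊙ denotes the coordinatewise (Hadamard) product. -/
import Mathlib


noncomputable section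

/-- The objective of the prox problem for the squared weighted `ℓ₁`-norm:
`(1/2)‖x − x₀‖² + λ·(1/2)(Σᵢ dᵢ|xᵢ|)²`, with the Euclidean norm written as a
sum of squares of the coordinates. -/
def sqWeightedL1Obj {p : ℕ} (lam : ℝ) (d : Fin p → ℝ) (x₀ x : Fin p → ℝ) : ℝ :=
  (1 / 2) * (∑ i, (x i - x₀ i) ^ 2) + lam * ((1 / 2) * (∑ i, d i * |x i|) ^ 2)


/-- Uniqueness of the minimizer, via strict convexity (midpoint argument). -/
lemma sqWeightedL1Obj_min_unique {p : ℕ} (lam : ℝ) (hlam : 0 < lam)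
    (d : Fin p → ℝ) (hd : ∀ i, 0 ≤ d i) (y z z' : Fin p → ℝ)
    (hz : ∀ w, sqWeightedL1Obj lam d y z ≤ sqWeightedL1Obj lam d y w)
    (hz' : ∀ w, sqWeightedL1Obj lam d y z' ≤ sqWeightedL1Obj lam d y w) :
    z = z' := by
  set m : Fin p → ℝ := fun i => (z i + z' i) / 2 with hm
  set A : ℝ := ∑ i, d i * |z i| with hA
  set B : ℝ := ∑ i, d i * |z' i| with hB
  set M : ℝ := ∑ i, d i * |m i| with hM
  have hA0 : 0 ≤ A := Finset.sum_nonneg fun i _ => mul_nonneg (hd i) (abs_nonneg _)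
  have hB0 : 0 ≤ B := Finset.sum_nonneg fun i _ => mul_nonneg (hd i) (abs_nonneg _)
  have hM0 : 0 ≤ M := Finset.sum_nonneg fun i _ => mul_nonneg (hd i) (abs_nonneg _)
  have hMle : M ≤ (A + B) / 2 := by
    have : M ≤ ∑ i, d i * ((|z i| + |z' i|) / 2) := by
      apply Finset.sum_le_sum
      intro i _
      apply mul_le_mul_of_nonneg_left _ (hd i)
      have := abs_add_le (z i) (z' i)
      simp only [hm]
      rw [abs_div]
      simp [abs_of_nonneg]
      linarith [abs_add_le (z i) (z' i)]
    calc M ≤ ∑ i, d i * ((|z i| + |z' i|) / 2) := this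
      _ = (A + B) / 2 := by
          rw [hA, hB, ← Finset.sum_add_distrib]
          rw [Finset.sum_div]
          apply Finset.sum_congr rfl
          intro i _; ring
  have hMsq : M ^ 2 ≤ ((A + B) / 2) ^ 2 := by
    apply pow_le_pow_left₀ hM0 hMle
  have hpen : M ^ 2 ≤ (A ^ 2 + B ^ 2) / 2 := by nlinarith [sq_nonneg (A - B)]
  have hquad : ∑ i, (m i - y i) ^ 2
      = (∑ i, (z i - y i) ^ 2 + ∑ i, (z' i - y i) ^ 2) / 2
        - (∑ i, (z i - z' i) ^ 2) / 4 := by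
    rw [← Finset.sum_add_distrib, Finset.sum_div, Finset.sum_div, ← Finset.sum_sub_distrib]
    apply Finset.sum_congr rfl
    intro i _; simp only [hm]; ring
  set D : ℝ := ∑ i, (z i - z' i) ^ 2 with hD
  have hobj : sqWeightedL1Obj lam d y m
      ≤ (sqWeightedL1Obj lam d y z + sqWeightedL1Obj lam d y z') / 2 - D / 8 := by
    unfold sqWeightedL1Obj
    rw [hquad]
    have : lam * ((1/2) * M ^ 2) ≤ lam * ((1/2) * ((A ^ 2 + B ^ 2) / 2)) := by
      apply mul_le_mul_of_nonneg_left _ hlam.le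
      linarith
    simp only [← hA, ← hB, ← hM, ← hD]
    nlinarith
  have heq : sqWeightedL1Obj lam d y z = sqWeightedL1Obj lam d y z' :=
    le_antisymm (hz z') (hz' z)
  have hge : sqWeightedL1Obj lam d y z ≤ sqWeightedL1Obj lam d y m := hz m
  have hD0 : D ≤ 0 := by rw [heq] at hobj hge; linarith
  have hDnn : 0 ≤ D := Finset.sum_nonneg fun i _ => sq_nonneg _
  have hDz : D = 0 := le_antisymm hD0 hDnn
  funext i
  have := (Finset.sum_eq_zero_iff_of_nonneg (fun i _ => sq_nonneg (z i - z' i))).mp hDz i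
    (Finset.mem_univ i)
  have := pow_eq_zero_iff (n := 2) (by norm_num) |>.mp this
  linarith

/-- sign-flip invariance of the objective. -/
lemma sqWeightedL1Obj_flip {p : ℕ} (lam : ℝ) (d : Fin p → ℝ) (x₀ : Fin p → ℝ)
    (σ : Fin p → ℝ) (hσ : ∀ i, σ i = 1 ∨ σ i = -1) (w : Fin p → ℝ) :
    sqWeightedL1Obj lam d (fun i => σ i * x₀ i) w
      = sqWeightedL1Obj lam d x₀ (fun i => σ i * w i) := by
  have hσ2 : ∀ i, σ i ^ 2 = 1 := by intro i; rcases hσ i with h | h <;> simp [h]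
  have hσabs : ∀ i, |σ i| = 1 := by intro i; rcases hσ i with h | h <;> simp [h]
  unfold sqWeightedL1Obj
  have h1 : ∑ i, (w i - σ i * x₀ i) ^ 2 = ∑ i, (σ i * w i - x₀ i) ^ 2 := by
    apply Finset.sum_congr rfl
    intro i _
    have he : w i - σ i * x₀ i = σ i * (σ i * w i - x₀ i) := by
      linear_combination (-(w i)) * hσ2 i
    rw [he, mul_pow, hσ2 i, one_mul]
  have h2 : ∑ i, d i * |w i| = ∑ i, d i * |σ i * w i| := by
    apply Finset.sum_congr rfl
    intro i _
    rw [abs_mul, hσabs i, one_mul]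
  simp only [h1, h2]

/-- sign preservation for the prox of the squared weighted
`ℓ₁`-norm: the minimizer `x*` of `(1/2)‖x − x₀‖² + λφ_d(x)` agrees in sign
with `x₀`, and for any sign vector `σ ∈ {−1,1}^p`,
`prox_{λφ_d}(σ ⊙ x₀) = σ ⊙ prox_{λφ_d}(x₀)`. -/
theorem sq_weighted_l1_prox_sign {p : ℕ} (lam : ℝ) (hlam : 0 < lam)
    (d : Fin p → ℝ) (hd : ∀ i, 0 ≤ d i) (x₀ xstar : Fin p → ℝ)
    (hmin : ∀ x : Fin p → ℝ, sqWeightedL1Obj lam d x₀ xstar ≤ sqWeightedL1Obj lam d x₀ x) :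
    (∀ i, 0 ≤ x₀ i * xstar i) ∧
    (∀ σ : Fin p → ℝ, (∀ i, σ i = 1 ∨ σ i = -1) →
      ∀ z : Fin p → ℝ,
        (∀ w : Fin p → ℝ,
          sqWeightedL1Obj lam d (fun i => σ i * x₀ i) z
            ≤ sqWeightedL1Obj lam d (fun i => σ i * x₀ i) w) →
        z = fun i => σ i * xstar i) := by
  constructor
  · intro i
    by_contra h
    push_neg at h
    set x : Fin p → ℝ := Function.update xstar i (-xstar i) with hx
    have hpen : ∑ j, d j * |x j| = ∑ j, d j * |xstar j| := by
      apply Finset.sum_congr rfl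
      intro j _
      by_cases hj : j = i
      · subst hj; simp [hx]
      · simp [hx, Function.update_of_ne hj]
    have hquad : ∑ j, (x j - x₀ j) ^ 2
        = ∑ j, (xstar j - x₀ j) ^ 2 + 4 * (x₀ i * xstar i) := by
      rw [← Finset.sum_erase_add _ _ (Finset.mem_univ i),
          ← Finset.sum_erase_add _ (fun j => (xstar j - x₀ j) ^ 2) (Finset.mem_univ i)]
      have h1 : ∑ j ∈ Finset.univ.erase i, (x j - x₀ j) ^ 2
          = ∑ j ∈ Finset.univ.erase i, (xstar j - x₀ j) ^ 2 := by
        apply Finset.sum_congr rfl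
        intro j hj
        rw [hx, Function.update_of_ne (Finset.ne_of_mem_erase hj)]
      rw [h1]
      have : x i = -xstar i := by simp [hx]
      rw [this]; ring
    have : sqWeightedL1Obj lam d x₀ x < sqWeightedL1Obj lam d x₀ xstar := by
      unfold sqWeightedL1Obj
      rw [hpen, hquad]
      linarith
    exact absurd (hmin x) (not_le.mpr this)
  · intro σ hσ z hz
    have hσ2 : ∀ i, σ i * σ i = 1 := by
      intro i; rcases hσ i with h | h <;> simp [h]
    have hflipstar : ∀ w, sqWeightedL1Obj lam d (fun i => σ i * x₀ i) (fun i => σ i * xstar i)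
        ≤ sqWeightedL1Obj lam d (fun i => σ i * x₀ i) w := by
      intro w
      rw [sqWeightedL1Obj_flip lam d x₀ σ hσ, sqWeightedL1Obj_flip lam d x₀ σ hσ]
      have : (fun i => σ i * (σ i * xstar i)) = xstar := by
        funext i; rw [← mul_assoc, hσ2 i, one_mul]
      rw [this]
      exact hmin _
    exact sqWeightedL1Obj_min_unique lam hlam d hd _ z _ hz hflipstar
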